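/- Let $V$ be a linear subspace of a finite dimensional complex vector space $E$ and $\pi\colon E\to E/V$ the quotient projection. Let $(A_n)$ be a subexponential sequence of linear automorphisms of $E$ with $A_n V = V$ for every $n$, and assume that for every $\theta>1$ there exist $C(\theta)>0$ and $0<\alpha(\theta)<1$ such that the induced operators on $E/V$ satisfy $\|A_{n+\ell,n}^{-1}\|_{L(E/V)} \le C(\theta)\theta^n\alpha(\theta)^\ell$ for all $n,\ell$. Then for every subexponential sequence $(b_n)\subset E$ there exist a subexponential sequence $(u_n)\subset E$, unique modulo $V$, and a subexponential sequence $(v_n)\subset V$ such that $u_{n+1} = A_n u_n + b_n + v_n$ for all $n$. -/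

import Mathlib

/-- A sequence in a normed space is subexponential if for every `θ > 1` it is `O(θ^n)`. -/
def Subexp {E : Type*} [Norm E] (u : ℕ → E) : Prop :=
  ∀ θ : ℝ, 1 < θ → ∃ B : ℝ, 0 < B ∧ ∀ n : ℕ, ‖u n‖ ≤ B * θ ^ n

/-- `transE A m ℓ` is the composition `A_{m+ℓ-1} ∘ ⋯ ∘ A_m`, i.e. `A_{m+ℓ, m}`. -/
def transE {E : Type*} [NormedAddCommGroup E] [NormedSpace ℂ E]
    (A : ℕ → E ≃L[ℂ] E) (m : ℕ) : ℕ → (E ≃L[ℂ] E)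
  | 0 => ContinuousLinearEquiv.refl ℂ E
  | (ℓ + 1) => (transE A m ℓ).trans (A (m + ℓ))

/-
In the quotient `E ⧸ V` the recursion reads `ū_{n+1} = A_n ū_n + π b_n`. Since the inverse cocycle
contracts there, it can be solved backwards from infinity: `ū_n = -∑_k π(A_{n+k+1,n}⁻¹ b_{n+k})`,
a series whose terms are `O(θⁿ rᵏ)` with `r < 1`. Any linear lift `u` of `ū` solves the original
recursion up to an error `v` in `V`. Conversely, the difference `w` of two solutions satisfies
`π w_n = π A_{n+ℓ,n}⁻¹ w_{n+ℓ}`, so `‖π w_n‖ ≤ C θⁿ αˡ ‖w_{n+ℓ}‖`, which tends to `0` as `ℓ → ∞`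
because `w` is subexponential; as `V` is closed, `w_n ∈ V`.
-/

lemma exists_one_lt_mul_self_eq {θ : ℝ} (hθ : 1 < θ) : ∃ σ : ℝ, 1 < σ ∧ σ * σ = θ :=
  ⟨√θ, (Real.lt_sqrt zero_le_one).mpr (by linarith), Real.mul_self_sqrt (by linarith)⟩

lemma exists_one_lt_le_mul_lt_one {σ α : ℝ} (hσ : 1 < σ) (hα0 : 0 < α) (hα1 : α < 1) :
    ∃ τ : ℝ, 1 < τ ∧ τ ≤ σ ∧ α * τ < 1 := by
  obtain ⟨τ, hτ1, hτ⟩ := exists_between (lt_min hσ ((one_lt_inv₀ hα0).mpr hα1))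
  refine ⟨τ, hτ1, (hτ.trans_le (min_le_left _ _)).le, ?_⟩
  calc α * τ < α * α⁻¹ := mul_lt_mul_of_pos_left (hτ.trans_le (min_le_right _ _)) hα0
    _ = 1 := mul_inv_cancel₀ hα0.ne'

lemma nonpos_of_le_mul_pow {a K r : ℝ} (hr0 : 0 ≤ r) (hr1 : r < 1) (h : ∀ ℓ : ℕ, a ≤ K * r ^ ℓ) :
    a ≤ 0 := by
  have hlim : Filter.Tendsto (fun ℓ : ℕ => K * r ^ ℓ) Filter.atTop (nhds 0) := by
    simpa using (tendsto_pow_atTop_nhds_zero_of_lt_one hr0 hr1).const_mul K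
  exact ge_of_tendsto' hlim h

section Subexp

variable {F G H : Type*} [SeminormedAddCommGroup F] [SeminormedAddCommGroup G]
  [SeminormedAddCommGroup H]

lemma Subexp.of_bound {u : ℕ → F} (h : ∀ θ : ℝ, 1 < θ → ∃ B : ℝ, ∀ n, ‖u n‖ ≤ B * θ ^ n) :
    Subexp u := by
  intro θ hθ
  obtain ⟨B, hB⟩ := h θ hθ
  exact ⟨max B 1, by positivity, fun n =>
    (hB n).trans (mul_le_mul_of_nonneg_right (le_max_left _ _) (by positivity))⟩

lemma Subexp.neg {u : ℕ → F} (hu : Subexp u) : Subexp fun n => -u n := by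
  simpa only [Subexp, norm_neg] using hu

lemma Subexp.sub {u w : ℕ → F} (hu : Subexp u) (hw : Subexp w) : Subexp fun n => u n - w n := by
  refine Subexp.of_bound fun θ hθ => ?_
  obtain ⟨B, -, hB⟩ := hu θ hθ
  obtain ⟨B', -, hB'⟩ := hw θ hθ
  exact ⟨B + B', fun n => by linarith [norm_sub_le (u n) (w n), hB n, hB' n]⟩

lemma Subexp.comp_succ {u : ℕ → F} (hu : Subexp u) : Subexp fun n => u (n + 1) := by
  refine Subexp.of_bound fun θ hθ => ?_
  obtain ⟨B, -, hB⟩ := hu θ hθ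
  exact ⟨B * θ, fun n => (hB (n + 1)).trans_eq (by ring)⟩

lemma Subexp.of_norm_le {u : ℕ → F} {w : ℕ → G} (hu : Subexp u) (C : ℝ)
    (h : ∀ n, ‖w n‖ ≤ C * ‖u n‖) : Subexp w := by
  refine Subexp.of_bound fun θ hθ => ?_
  obtain ⟨B, -, hB⟩ := hu θ hθ
  refine ⟨|C| * B, fun n => ?_⟩
  calc ‖w n‖ ≤ |C| * ‖u n‖ := (h n).trans (by gcongr; exact le_abs_self C)
    _ ≤ |C| * (B * θ ^ n) := by gcongr; exact hB n
    _ = |C| * B * θ ^ n := by ring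

lemma Subexp.of_norm_le_mul {f : ℕ → F} {g : ℕ → G} {w : ℕ → H} (hf : Subexp f) (hg : Subexp g)
    (h : ∀ n, ‖w n‖ ≤ ‖f n‖ * ‖g n‖) : Subexp w := by
  refine Subexp.of_bound fun θ hθ => ?_
  obtain ⟨σ, hσ, rfl⟩ := exists_one_lt_mul_self_eq hθ
  obtain ⟨B, hB, hfB⟩ := hf σ hσ
  obtain ⟨B', -, hgB'⟩ := hg σ hσ
  refine ⟨B * B', fun n => ?_⟩
  calc ‖w n‖ ≤ ‖f n‖ * ‖g n‖ := h n
    _ ≤ (B * σ ^ n) * (B' * σ ^ n) := by gcongr; exacts [hfB n, hgB' n]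
    _ = B * B' * (σ * σ) ^ n := by ring

lemma Subexp.tsum_of_norm_le_geometric [CompleteSpace F] {q : ℕ → ℕ → F}
    (h : ∀ θ : ℝ, 1 < θ → ∃ K r : ℝ, 0 ≤ r ∧ r < 1 ∧ ∀ n k, ‖q n k‖ ≤ K * θ ^ n * r ^ k) :
    Subexp fun n => ∑' k, q n k := by
  refine Subexp.of_bound fun θ hθ => ?_
  obtain ⟨K, r, hr0, hr1, hq⟩ := h θ hθ
  refine ⟨K * (1 - r)⁻¹, fun n => ?_⟩
  calc ‖∑' k, q n k‖ ≤ K * θ ^ n * (1 - r)⁻¹ :=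
        tsum_of_norm_bounded ((hasSum_geometric_of_lt_one hr0 hr1).mul_left _) (hq n)
    _ = K * (1 - r)⁻¹ * θ ^ n := by ring

end Subexp

section transE

variable {E : Type*} [NormedAddCommGroup E] [NormedSpace ℂ E] (A : ℕ → E ≃L[ℂ] E)

lemma transE_succ_apply (m ℓ : ℕ) (x : E) :
    transE A m (ℓ + 1) x = A (m + ℓ) (transE A m ℓ x) := rfl

lemma transE_succ_apply' (m ℓ : ℕ) (x : E) :
    transE A m (ℓ + 1) x = transE A (m + 1) ℓ (A m x) := by
  induction ℓ with
  | zero => rfl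
  | succ ℓ ih =>
    rw [transE_succ_apply, ih, transE_succ_apply, Nat.add_right_comm, ← add_assoc]

lemma apply_transE_succ_symm_apply (m ℓ : ℕ) (x : E) :
    A m ((transE A m (ℓ + 1)).symm x) = (transE A (m + 1) ℓ).symm x := by
  rw [ContinuousLinearEquiv.eq_symm_apply, ← transE_succ_apply',
    ContinuousLinearEquiv.apply_symm_apply]

end transE

section Quotient

variable {E : Type*} [NormedAddCommGroup E] [NormedSpace ℂ E] (V : Submodule ℂ E)
  (A : ℕ → E ≃L[ℂ] E)

def quotientMapL (T : E →L[ℂ] E) (hT : V ≤ V.comap (T : E →ₗ[ℂ] E)) : (E ⧸ V) →L[ℂ] E ⧸ V :=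
  V.liftQL (V.mkQL ∘L T) fun _ hx => (Submodule.Quotient.mk_eq_zero V).mpr (hT hx)

def QuotientBackwardContracting : Prop :=
  ∀ θ : ℝ, 1 < θ → ∃ C : ℝ, 0 < C ∧ ∃ α : ℝ, 0 < α ∧ α < 1 ∧
    ∀ n ℓ : ℕ, ∀ x : E, ‖V.mkQ ((transE A n ℓ).symm x)‖ ≤ C * θ ^ n * α ^ ℓ * ‖V.mkQ x‖

noncomputable def quotientSolution (b : ℕ → E) (n : ℕ) : E ⧸ V :=
  -∑' k, V.mkQ ((transE A n (k + 1)).symm (b (n + k)))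

variable {V A}

lemma mkQ_add_eq_mkQ_transE (hAV : ∀ n, V ≤ V.comap (A n : E →ₗ[ℂ] E)) {w : ℕ → E}
    (hw : ∀ n, V.mkQ (w (n + 1)) = V.mkQ (A n (w n))) (n ℓ : ℕ) :
    V.mkQ (w (n + ℓ)) = V.mkQ (transE A n ℓ (w n)) := by
  induction ℓ with
  | zero => rfl
  | succ ℓ ih =>
    rw [← add_assoc, hw, transE_succ_apply]
    exact congrArg (quotientMapL V (A (n + ℓ)) (hAV (n + ℓ))) ih

theorem mem_of_subexp_of_mkQ_succ [IsClosed (V : Set E)] (hAV : ∀ n, V ≤ V.comap (A n : E →ₗ[ℂ] E))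
    (hA : QuotientBackwardContracting V A) {w : ℕ → E} (hw : Subexp w)
    (hrec : ∀ n, V.mkQ (w (n + 1)) = V.mkQ (A n (w n))) (n : ℕ) : w n ∈ V := by
  obtain ⟨C, hC, α, hα0, hα1, hCα⟩ := hA 2 one_lt_two
  obtain ⟨τ, hτ1, -, hατ⟩ := exists_one_lt_le_mul_lt_one one_lt_two hα0 hα1
  obtain ⟨B, -, hwB⟩ := hw τ hτ1
  have hτ0 : 0 ≤ τ := by linarith
  have hdecay : ‖V.mkQ (w n)‖ ≤ 0 := nonpos_of_le_mul_pow (by positivity) hατ fun ℓ => calc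
    ‖V.mkQ (w n)‖ = ‖V.mkQ ((transE A n ℓ).symm (transE A n ℓ (w n)))‖ := by
        rw [ContinuousLinearEquiv.symm_apply_apply]
    _ ≤ C * 2 ^ n * α ^ ℓ * ‖V.mkQ (w (n + ℓ))‖ := by
        rw [mkQ_add_eq_mkQ_transE hAV hrec]; exact hCα _ _ _
    _ ≤ C * 2 ^ n * α ^ ℓ * (B * τ ^ (n + ℓ)) := by
        gcongr; exact (Submodule.Quotient.norm_mk_le V _).trans (hwB _)
    _ = C * B * (2 * τ) ^ n * (α * τ) ^ ℓ := by ring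
  exact (QuotientAddGroup.norm_mk_eq_zero (S := V.toAddSubgroup)).mp
    (le_antisymm hdecay (norm_nonneg _))

theorem sub_mem_of_subexp_solutions [IsClosed (V : Set E)]
    (hAV : ∀ n, V ≤ V.comap (A n : E →ₗ[ℂ] E)) (hA : QuotientBackwardContracting V A)
    {b u v u' v' : ℕ → E} (hu : Subexp u) (hu' : Subexp u') (hv : ∀ n, v n ∈ V)
    (hv' : ∀ n, v' n ∈ V) (huv : ∀ n, u (n + 1) = A n (u n) + b n + v n)
    (huv' : ∀ n, u' (n + 1) = A n (u' n) + b n + v' n) (n : ℕ) : u' n - u n ∈ V := by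
  refine mem_of_subexp_of_mkQ_succ hAV hA (hu'.sub hu) (fun m => ?_) n
  rw [Submodule.mkQ_apply, Submodule.mkQ_apply, Submodule.Quotient.eq, huv, huv', map_sub]
  convert V.sub_mem (hv' m) (hv m) using 1
  abel

lemma norm_mkQ_transE_symm_le_geometric (hA : QuotientBackwardContracting V A) {b : ℕ → E}
    (hb : Subexp b) {θ : ℝ} (hθ : 1 < θ) : ∃ K r : ℝ, 0 ≤ r ∧ r < 1 ∧
      ∀ n k, ‖V.mkQ ((transE A n (k + 1)).symm (b (n + k)))‖ ≤ K * θ ^ n * r ^ k := by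
  obtain ⟨σ, hσ, rfl⟩ := exists_one_lt_mul_self_eq hθ
  obtain ⟨C, hC, α, hα0, hα1, hCα⟩ := hA σ hσ
  obtain ⟨τ, hτ1, hτσ, hατ⟩ := exists_one_lt_le_mul_lt_one hσ hα0 hα1
  obtain ⟨B, hB, hbB⟩ := hb τ hτ1
  have hτ0 : 0 ≤ τ := by linarith
  refine ⟨C * α * B, α * τ, by positivity, hατ, fun n k => ?_⟩
  calc ‖V.mkQ ((transE A n (k + 1)).symm (b (n + k)))‖
      ≤ C * σ ^ n * α ^ (k + 1) * ‖V.mkQ (b (n + k))‖ := hCα _ _ _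
    _ ≤ C * σ ^ n * α ^ (k + 1) * (B * τ ^ (n + k)) := by
        gcongr; exact (Submodule.Quotient.norm_mk_le V _).trans (hbB _)
    _ = C * α * B * (σ * τ) ^ n * (α * τ) ^ k := by ring
    _ ≤ C * α * B * (σ * σ) ^ n * (α * τ) ^ k := by gcongr

variable [CompleteSpace E]

lemma quotientSolution_subexp (hA : QuotientBackwardContracting V A) {b : ℕ → E}
    (hb : Subexp b) : Subexp (quotientSolution V A b) :=
  (Subexp.tsum_of_norm_le_geometric fun _ hθ =>
    norm_mkQ_transE_symm_le_geometric hA hb hθ).neg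

lemma quotientSolution_succ [IsClosed (V : Set E)] (hAV : ∀ n, V ≤ V.comap (A n : E →ₗ[ℂ] E))
    (hA : QuotientBackwardContracting V A) {b : ℕ → E} (hb : Subexp b) (n : ℕ) {x : E}
    (hx : V.mkQ x = quotientSolution V A b n) :
    V.mkQ (A n x + b n) = quotientSolution V A b (n + 1) := by
  set q : ℕ → ℕ → E ⧸ V := fun m k => V.mkQ ((transE A m (k + 1)).symm (b (m + k)))
  have hq : ∀ m, Summable (q m) := by
    obtain ⟨K, r, hr0, hr1, hKr⟩ := norm_mkQ_transE_symm_le_geometric hA hb one_lt_two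
    exact fun m => .of_norm_bounded ((summable_geometric_of_lt_one hr0 hr1).mul_left _) (hKr m)
  set T := quotientMapL V (A n) (hAV n)
  have hTq : ∀ k, T (q n k) = V.mkQ ((transE A (n + 1) k).symm (b (n + k))) := fun k =>
    congrArg V.mkQ (apply_transE_succ_symm_apply A n k _)
  have hsplit := ((hq n).mapL T).tsum_eq_zero_add
  simp only [hTq, ← add_assoc, Nat.add_right_comm n _ 1, add_zero] at hsplit
  calc V.mkQ (A n x + b n) = T (V.mkQ x) + V.mkQ (b n) := by rw [map_add]; rfl
    _ = -∑' k, T (q n k) + V.mkQ (b n) := by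
        rw [hx, quotientSolution, map_neg, T.map_tsum (hq n)]
    _ = quotientSolution V A b (n + 1) := by
        simp only [hTq, hsplit, quotientSolution, transE, ContinuousLinearEquiv.refl_symm,
          ContinuousLinearEquiv.refl_apply, neg_add_rev, neg_add_cancel_right]

end Quotient

theorem exists_subexp_solution {E : Type*} [NormedAddCommGroup E] [NormedSpace ℂ E]
    [FiniteDimensional ℂ E] {V : Submodule ℂ E} {A : ℕ → E ≃L[ℂ] E}
    (hAsub : Subexp fun n => (A n : E →L[ℂ] E)) (hAV : ∀ n, V ≤ V.comap (A n : E →ₗ[ℂ] E))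
    (hA : QuotientBackwardContracting V A) {b : ℕ → E} (hb : Subexp b) :
    ∃ u v : ℕ → E, Subexp u ∧ Subexp v ∧ (∀ n, v n ∈ V) ∧
      ∀ n, u (n + 1) = A n (u n) + b n + v n := by
  have : IsClosed (V : Set E) := V.closed_of_finiteDimensional
  obtain ⟨g, hg⟩ := V.mkQ.exists_rightInverse_of_surjective V.range_mkQ
  set gL := LinearMap.toContinuousLinearMap g
  set u : ℕ → E := fun n => gL (quotientSolution V A b n)
  have hu : ∀ n, V.mkQ (u n) = quotientSolution V A b n := fun n => LinearMap.congr_fun hg _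
  have hu_sub : Subexp u :=
    (quotientSolution_subexp hA hb).of_norm_le ‖gL‖ fun n => gL.le_opNorm _
  refine ⟨u, fun n => u (n + 1) - A n (u n) - b n, hu_sub, ?_, fun n => ?_,
    fun n => by simp only [sub_sub, add_sub_cancel]⟩
  · exact (hu_sub.comp_succ.sub (hAsub.of_norm_le_mul hu_sub fun n =>
      (A n : E →L[ℂ] E).le_opNorm _)).sub hb
  · change u (n + 1) - A n (u n) - b n ∈ V
    rw [← Submodule.Quotient.mk_eq_zero, sub_sub, ← Submodule.mkQ_apply, map_sub, hu,
      quotientSolution_succ hAV hA hb n (hu n), sub_self]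

theorem stmt3 {E : Type*} [NormedAddCommGroup E] [NormedSpace ℂ E] [FiniteDimensional ℂ E]
    (V : Submodule ℂ E) (A : ℕ → E ≃L[ℂ] E)
    (hAsub : Subexp (fun n => (A n : E →L[ℂ] E)))
    (hAV : ∀ n : ℕ, Submodule.map (A n : E →ₗ[ℂ] E) V = V)
    (hA : ∀ θ : ℝ, 1 < θ → ∃ C : ℝ, 0 < C ∧ ∃ α : ℝ, 0 < α ∧ α < 1 ∧
      ∀ n ℓ : ℕ, ∀ x : E,
        ‖(Submodule.Quotient.mk ((transE A n ℓ).symm x) : E ⧸ V)‖ ≤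
          C * θ ^ n * α ^ ℓ * ‖(Submodule.Quotient.mk x : E ⧸ V)‖)
    (b : ℕ → E) (hb : Subexp b) :
    ∃ u v : ℕ → E, Subexp u ∧ Subexp v ∧ (∀ n, v n ∈ V) ∧
      (∀ n : ℕ, u (n + 1) = A n (u n) + b n + v n) ∧
      ∀ u' v' : ℕ → E, Subexp u' → Subexp v' → (∀ n, v' n ∈ V) →
        (∀ n : ℕ, u' (n + 1) = A n (u' n) + b n + v' n) → ∀ n, u' n - u n ∈ V := by
  have hAV' : ∀ n, V ≤ V.comap (A n : E →ₗ[ℂ] E) := fun n =>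
    Submodule.map_le_iff_le_comap.mp (hAV n).le
  have : IsClosed (V : Set E) := V.closed_of_finiteDimensional
  obtain ⟨u, v, hu, hv, hvV, huv⟩ := exists_subexp_solution hAsub hAV' hA hb
  exact ⟨u, v, hu, hv, hvV, huv, fun u' v' hu' _ hv'V huv' =>
    sub_mem_of_subexp_solutions hAV' hA hu hu' hvV hv'V huv huv'⟩
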